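/- arXiv:0902.2150 — 3 statements merged into one kernel-verified Lean document; each statement's English description precedes it below -/
import Mathlib

section
/- Let H be a graph with girth at least 7 and G = H², with G connected and not complete. Then every edge of H joining two vertices each of degree at least 2 in H belongs to exactly two distinct maximal cliques of G. -/
/-!
For `H` of girth at least 6 (no cycles of length 3, 4 or 5), every closed neighbourhood
`N[x]` (`closedNbhd`) is a clique of `H²`, and it is maximal as soon as `x` has two
neighbours: a vertex outside `N[x]` joined in `H²` to all of `N[x]` would be adjacent in `H`
to both neighbours, closing a 4-cycle. Conversely, a clique of `H²` containing an edge `xy`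
of `H` lies in `N[x]` or in `N[y]`, since a vertex of `N[x] \ N[y]` and a vertex of
`N[y] \ N[x]` are at distance 3. So the maximal cliques through `xy` are exactly `N[x]` and
`N[y]`, which differ because a neighbour of `x` other than `y` is not in `N[y]`.
-/

open SimpleGraph

variable {V : Type*}

/-- The square of a graph: `x` and `y` are adjacent iff `1 ≤ d_H(x,y) ≤ 2`. -/
def graphSq (H : SimpleGraph V) : SimpleGraph V where
  Adj x y := x ≠ y ∧ (H.Adj x y ∨ ∃ z, H.Adj x z ∧ H.Adj z y)
  symm := by
    constructor
    rintro x y ⟨hxy, h | ⟨z, h1, h2⟩⟩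
    · exact ⟨hxy.symm, Or.inl h.symm⟩
    · exact ⟨hxy.symm, Or.inr ⟨z, h2.symm, h1.symm⟩⟩
  loopless := ⟨fun x h => h.1 rfl⟩

/-- `Q` is a maximal clique of `G`. -/
def IsMaxClique (G : SimpleGraph V) (Q : Set V) : Prop :=
  G.IsClique Q ∧ ∀ R : Set V, G.IsClique R → Q ⊆ R → R = Q

/-- `xy` is a forced edge of `G`: it lies in at least two distinct maximal cliques. -/
def Forced (G : SimpleGraph V) (x y : V) : Prop :=
  G.Adj x y ∧ ∃ Q₁ Q₂ : Set V, Q₁ ≠ Q₂ ∧ IsMaxClique G Q₁ ∧ IsMaxClique G Q₂ ∧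
    x ∈ Q₁ ∧ y ∈ Q₁ ∧ x ∈ Q₂ ∧ y ∈ Q₂

/-- The subgraph of `G` consisting of all forced edges. -/
def forcedSubgraph (G : SimpleGraph V) : SimpleGraph V where
  Adj := Forced G
  symm := by
    constructor
    rintro x y ⟨hadj, Q₁, Q₂, hne, h1, h2, hx1, hy1, hx2, hy2⟩
    exact ⟨hadj.symm, Q₁, Q₂, hne, h1, h2, hy1, hx1, hy2, hx2⟩
  loopless := ⟨fun x h => h.1.ne rfl⟩

/-- `H` contains no cycle of length 3 and no cycle of length 5. -/
def C3C5Free (H : SimpleGraph V) : Prop :=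
  ∀ (v : V) (w : H.Walk v v), w.IsCycle → w.length ≠ 3 ∧ w.length ≠ 5

/-- The set `S` induces a star in `F`: at least two vertices, a center adjacent to
all others, and the non-center vertices pairwise non-adjacent. -/
def IsStarOn (F : SimpleGraph V) (S : Set V) : Prop :=
  S.Nontrivial ∧ ∃ c ∈ S, (∀ x ∈ S, x ≠ c → F.Adj c x) ∧
    ∀ x ∈ S, ∀ y ∈ S, x ≠ c → y ≠ c → x ≠ y → ¬ F.Adj x y

namespace SimpleGraph

variable {H : SimpleGraph V}

section ShortCycles

variable {a b c d e : V}

lemma egirth_le_three (hab : H.Adj a b) (hbc : H.Adj b c) (hca : H.Adj c a) :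
    H.egirth ≤ 3 := by
  have hcyc : (Walk.cons hab (Walk.cons hbc (Walk.cons hca Walk.nil))).IsCycle := by
    have := hab.ne; have := hbc.ne; have := hca.ne
    aesop (add norm simp [Walk.isCycle_def, Walk.isTrail_def])
  exact egirth_le_length hcyc

lemma egirth_le_four (hac : a ≠ c) (hbd : b ≠ d) (hab : H.Adj a b) (hbc : H.Adj b c)
    (hcd : H.Adj c d) (hda : H.Adj d a) : H.egirth ≤ 4 := by
  have hcyc : (Walk.cons hab (Walk.cons hbc (Walk.cons hcd (Walk.cons hda
      Walk.nil)))).IsCycle := by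
    have := hab.ne; have := hbc.ne; have := hcd.ne; have := hda.ne
    aesop (add norm simp [Walk.isCycle_def, Walk.isTrail_def])
  exact egirth_le_length hcyc

lemma egirth_le_five (hac : a ≠ c) (had : a ≠ d) (hbd : b ≠ d) (hbe : b ≠ e) (hce : c ≠ e)
    (hab : H.Adj a b) (hbc : H.Adj b c) (hcd : H.Adj c d) (hde : H.Adj d e)
    (hea : H.Adj e a) : H.egirth ≤ 5 := by
  have hcyc : (Walk.cons hab (Walk.cons hbc (Walk.cons hcd (Walk.cons hde
      (Walk.cons hea Walk.nil))))).IsCycle := by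
    have := hab.ne; have := hbc.ne; have := hcd.ne; have := hde.ne; have := hea.ne
    aesop (add norm simp [Walk.isCycle_def, Walk.isTrail_def])
  exact egirth_le_length hcyc

end ShortCycles

lemma six_le_egirth_of_seven_le_girth (hg : 7 ≤ H.girth) : 6 ≤ H.egirth :=
  le_trans (by exact_mod_cast (by omega : 6 ≤ H.girth)) H.egirth.natCast_toNat_le_self

lemma exists_adj_ne_of_two_le_degree [Fintype V] [DecidableRel H.Adj] {x : V}
    (hx : 2 ≤ H.degree x) (y : V) : ∃ w, H.Adj x w ∧ w ≠ y := by
  obtain ⟨w, hw, hwy⟩ :=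
    Finset.exists_mem_ne (by rwa [H.card_neighborFinset_eq_degree x]) y
  exact ⟨w, (H.mem_neighborFinset x w).mp hw, hwy⟩

def closedNbhd (H : SimpleGraph V) (x : V) : Set V := insert x (H.neighborSet x)

lemma isClique_graphSq_closedNbhd (x : V) : (graphSq H).IsClique (H.closedNbhd x) := by
  rintro a (rfl | ha) b (rfl | hb) hab
  · exact absurd rfl hab
  · exact ⟨hab, Or.inl hb⟩
  · exact ⟨hab, Or.inl ha.symm⟩
  · exact ⟨hab, Or.inr ⟨x, ha.symm, hb⟩⟩

lemma closedNbhd_ne_closedNbhd (hg : 4 ≤ H.egirth) {x y w : V} (hxy : H.Adj x y)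
    (hxw : H.Adj x w) (hwy : w ≠ y) : H.closedNbhd x ≠ H.closedNbhd y := by
  intro h
  obtain hwy' | hyw := (h ▸ Or.inr hxw : w ∈ H.closedNbhd y)
  · exact hwy hwy'
  · exact absurd (hg.trans (egirth_le_three hxy hyw hxw.symm)) (by decide)

variable (hg : 6 ≤ H.egirth)
include hg

lemma not_graphSq_adj_of_notMem_closedNbhd {r z x w : V} (hr : r ∉ H.closedNbhd x)
    (hrz : H.Adj r z) (hzx : H.Adj z x) (hxw : H.Adj x w) (hwz : w ≠ z) :
    ¬ (graphSq H).Adj r w := by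
  have hrx : r ≠ x := fun h => hr (Or.inl h)
  have hxr : ¬ H.Adj x r := fun h => hr (Or.inr h)
  rintro ⟨hrw, hrw' | ⟨u, hru, huw⟩⟩
  · exact absurd (hg.trans (egirth_le_four hrx hwz.symm hrz hzx hxw hrw'.symm)) (by decide)
  · obtain rfl | hux := eq_or_ne u x
    · exact hxr hru.symm
    obtain rfl | huz := eq_or_ne u z
    · exact absurd (hg.trans (egirth_le_three hzx hxw huw.symm)) (by decide)
    exact absurd (hg.trans (egirth_le_five hrx hrw hwz.symm huz.symm hux.symm
      hrz hzx hxw huw.symm hru.symm)) (by decide)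

lemma adj_of_mem_clique_of_notMem_closedNbhd {Q : Set V} {x y q : V}
    (hQ : (graphSq H).IsClique Q) (hxy : H.Adj x y) (hx : x ∈ Q) (hy : y ∈ Q) (hq : q ∈ Q)
    (hqx : q ∉ H.closedNbhd x) : H.Adj y q := by
  have hqy : q ≠ y := fun h => hqx (Or.inr (h ▸ hxy))
  obtain ⟨hqx', hxq | ⟨z, hqz, hzx⟩⟩ := hQ hq hx fun h => hqx (Or.inl h)
  · exact absurd (Or.inr hxq.symm) hqx
  obtain rfl | hzy := eq_or_ne z y
  · exact hqz.symm
  exact absurd (hQ hq hy hqy) (not_graphSq_adj_of_notMem_closedNbhd hg hqx hqz hzx hxy hzy.symm)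

lemma isMaxClique_closedNbhd {x w₁ w₂ : V} (hw₁ : H.Adj x w₁) (hw₂ : H.Adj x w₂)
    (hne : w₁ ≠ w₂) : IsMaxClique (graphSq H) (H.closedNbhd x) := by
  refine ⟨isClique_graphSq_closedNbhd x, fun R hR hsub => ?_⟩
  refine (Set.Subset.antisymm hsub fun r hr => ?_).symm
  by_contra hrx
  have hxR : x ∈ R := hsub (Or.inl rfl)
  have h₁ := adj_of_mem_clique_of_notMem_closedNbhd hg hR hw₁ hxR (hsub (Or.inr hw₁)) hr hrx
  have h₂ := adj_of_mem_clique_of_notMem_closedNbhd hg hR hw₂ hxR (hsub (Or.inr hw₂)) hr hrx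
  have hxr : x ≠ r := fun h => hrx (Or.inl h.symm)
  exact absurd (hg.trans (egirth_le_four hxr hne hw₁ h₁ h₂.symm hw₂.symm)) (by decide)

lemma subset_closedNbhd_or_subset_closedNbhd {Q : Set V} {x y : V}
    (hQ : (graphSq H).IsClique Q) (hxy : H.Adj x y) (hx : x ∈ Q) (hy : y ∈ Q) :
    Q ⊆ H.closedNbhd x ∨ Q ⊆ H.closedNbhd y := by
  by_contra! h
  obtain ⟨⟨b, hb, hbx⟩, ⟨a, ha, hay⟩⟩ := And.imp Set.not_subset.mp Set.not_subset.mp h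
  have hyb := adj_of_mem_clique_of_notMem_closedNbhd hg hQ hxy hx hy hb hbx
  have hxa := adj_of_mem_clique_of_notMem_closedNbhd hg hQ hxy.symm hy hx ha hay
  have hay' : a ≠ y := fun h => hay (Or.inl h)
  have hba : b ≠ a := fun h => hbx (Or.inr (h ▸ hxa))
  exact not_graphSq_adj_of_notMem_closedNbhd hg hbx hyb.symm hxy.symm hxa hay' (hQ hb ha hba)

lemma IsMaxClique.eq_closedNbhd_or_eq_closedNbhd {Q : Set V} {x y : V}
    (hQ : IsMaxClique (graphSq H) Q) (hxy : H.Adj x y) (hx : x ∈ Q) (hy : y ∈ Q) :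
    Q = H.closedNbhd x ∨ Q = H.closedNbhd y :=
  (subset_closedNbhd_or_subset_closedNbhd hg hQ.1 hxy hx hy).imp
    (fun h => (hQ.2 _ (isClique_graphSq_closedNbhd x) h).symm)
    (fun h => (hQ.2 _ (isClique_graphSq_closedNbhd y) h).symm)

end SimpleGraph

theorem stmt6_general [Fintype V] (H : SimpleGraph V) [DecidableRel H.Adj]
    (hgirth : 7 ≤ H.girth)
    (x y : V) (hxy : H.Adj x y) (hx : 2 ≤ H.degree x) (hy : 2 ≤ H.degree y) :
    ∃ Q₁ Q₂ : Set V, Q₁ ≠ Q₂ ∧ IsMaxClique (graphSq H) Q₁ ∧ IsMaxClique (graphSq H) Q₂ ∧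
      x ∈ Q₁ ∧ y ∈ Q₁ ∧ x ∈ Q₂ ∧ y ∈ Q₂ ∧
      ∀ Q : Set V, IsMaxClique (graphSq H) Q → x ∈ Q → y ∈ Q → Q = Q₁ ∨ Q = Q₂ := by
  have hg := six_le_egirth_of_seven_le_girth hgirth
  obtain ⟨x', hxx', hx'y⟩ := exists_adj_ne_of_two_le_degree hx y
  obtain ⟨y', hyy', hy'x⟩ := exists_adj_ne_of_two_le_degree hy x
  refine ⟨H.closedNbhd x, H.closedNbhd y,
    closedNbhd_ne_closedNbhd (le_trans (by decide) hg) hxy hxx' hx'y,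
    isMaxClique_closedNbhd hg hxy hxx' hx'y.symm,
    isMaxClique_closedNbhd hg hxy.symm hyy' hy'x.symm,
    Or.inl rfl, Or.inr hxy, Or.inr hxy.symm, Or.inl rfl,
    fun Q hQ hxQ hyQ => hQ.eq_closedNbhd_or_eq_closedNbhd hg hxy hxQ hyQ⟩

theorem stmt6 [Fintype V] (H : SimpleGraph V) [DecidableRel H.Adj]
    (hgirth : 7 ≤ H.girth) (hconn : (graphSq H).Connected) (hnc : graphSq H ≠ ⊤)
    (x y : V) (hxy : H.Adj x y) (hx : 2 ≤ H.degree x) (hy : 2 ≤ H.degree y) :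
    ∃ Q₁ Q₂ : Set V, Q₁ ≠ Q₂ ∧ IsMaxClique (graphSq H) Q₁ ∧ IsMaxClique (graphSq H) Q₂ ∧
      x ∈ Q₁ ∧ y ∈ Q₁ ∧ x ∈ Q₂ ∧ y ∈ Q₂ ∧
      ∀ Q : Set V, IsMaxClique (graphSq H) Q → x ∈ Q → y ∈ Q → Q = Q₁ ∨ Q = Q₂ :=
  stmt6_general H hgirth x y hxy hx hy
end

section
/- Let H₁ and H₂ be connected graphs, both with girth at least 7, such that H₁² = H₂² (as graphs on the same vertex set with the square not complete). Then H₁ and H₂ are isomorphic. -/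
open SimpleGraph

variable {V : Type*}

/-!
In a connected graph `H` of girth at least 6 whose square is not complete, the leaves of `H` are
exactly the vertices whose neighbourhood in `H²` is a clique, so `H₁` and `H₂` have the same leaves.
An `H₁`-edge between two non-leaves is an `H₂`-edge, since otherwise a detour of length 2 in `H₂`
closes a cycle of length at most 6 in `H₁` or in `H₂`. So if every leaf hangs at the same vertex in
both graphs, then `H₁ = H₂`. Otherwise some leaf hangs at `c` in `H₁` and at `c' ≠ c` in `H₂`; then
`c` and `c'` are the only non-leaves, both graphs are double stars on them, and swapping `c` and
`c'` is an isomorphism.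
-/

namespace SimpleGraph

section ShortCycles

variable {H : SimpleGraph V}

lemma Walk.IsCycle.le_length_of_le_egirth {n : ℕ} (hg : n ≤ H.egirth) {v : V}
    {w : H.Walk v v} (hw : w.IsCycle) : n ≤ w.length := by
  exact_mod_cast hg.trans (egirth_le_length hw)

lemma no_cycle3 (hg : 4 ≤ H.egirth) {a b c : V} (h₁ : H.Adj a b) (h₂ : H.Adj b c)
    (h₃ : H.Adj c a) : False := by
  have hw : (Walk.cons h₁ (Walk.cons h₂ (Walk.cons h₃ Walk.nil))).IsCycle := by
    simp [Walk.cons_isCycle_iff, h₁.ne, h₂.ne, h₃.ne, h₁.ne', h₃.ne']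
  simpa using hw.le_length_of_le_egirth hg

lemma no_cycle4 (hg : 5 ≤ H.egirth) {a b c d : V} (h₁ : H.Adj a b) (h₂ : H.Adj b c)
    (h₃ : H.Adj c d) (h₄ : H.Adj d a) (hac : a ≠ c) (hbd : b ≠ d) : False := by
  have hw : (Walk.cons h₁ (Walk.cons h₂ (Walk.cons h₃ (Walk.cons h₄ Walk.nil)))).IsCycle := by
    simp [Walk.cons_isCycle_iff, h₁.ne, h₂.ne, h₃.ne, h₄.ne, h₁.ne', h₄.ne', hac, hbd, hac.symm]
  simpa using hw.le_length_of_le_egirth hg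

lemma no_cycle5 (hg : 6 ≤ H.egirth) {a b c d e : V} (h₁ : H.Adj a b) (h₂ : H.Adj b c)
    (h₃ : H.Adj c d) (h₄ : H.Adj d e) (h₅ : H.Adj e a)
    (hac : a ≠ c) (had : a ≠ d) (hbd : b ≠ d) (hbe : b ≠ e) (hce : c ≠ e) : False := by
  have hw : (Walk.cons h₁ (Walk.cons h₂ (Walk.cons h₃ (Walk.cons h₄
      (Walk.cons h₅ Walk.nil))))).IsCycle := by
    simp [Walk.cons_isCycle_iff, h₁.ne, h₂.ne, h₃.ne, h₄.ne, h₅.ne, h₁.ne', h₅.ne', hac, had,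
      hbd, hbe, hce, hac.symm, had.symm]
  simpa using hw.le_length_of_le_egirth hg

lemma no_cycle6 (hg : 7 ≤ H.egirth) {a b c d e f : V} (h₁ : H.Adj a b) (h₂ : H.Adj b c)
    (h₃ : H.Adj c d) (h₄ : H.Adj d e) (h₅ : H.Adj e f) (h₆ : H.Adj f a)
    (hac : a ≠ c) (had : a ≠ d) (hae : a ≠ e) (hbd : b ≠ d) (hbe : b ≠ e) (hbf : b ≠ f)
    (hce : c ≠ e) (hcf : c ≠ f) (hdf : d ≠ f) : False := by
  have hw : (Walk.cons h₁ (Walk.cons h₂ (Walk.cons h₃ (Walk.cons h₄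
      (Walk.cons h₅ (Walk.cons h₆ Walk.nil)))))).IsCycle := by
    simp [Walk.cons_isCycle_iff, h₁.ne, h₂.ne, h₃.ne, h₄.ne, h₅.ne, h₆.ne, h₁.ne', h₆.ne', hac,
      had, hae, hbd, hbe, hbf, hce, hcf, hdf, hac.symm, had.symm, hae.symm]
  simpa using hw.le_length_of_le_egirth hg

end ShortCycles

lemma Connected.mem_of_adj_closed {G : SimpleGraph V} (hc : G.Connected) {S : Set V}
    (hS : ∀ v ∈ S, ∀ w, G.Adj v w → w ∈ S) {a : V} (ha : a ∈ S) (v : V) : v ∈ S := by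
  obtain ⟨p⟩ := hc.preconnected a v
  induction p with
  | nil => exact ha
  | cons h _ ih => exact ih (hS _ ha _ h)

section Square

variable {H : SimpleGraph V} {x y z c d : V}

lemma graphSq_adj_of_adj (h : H.Adj x y) : (graphSq H).Adj x y := ⟨h.ne, .inl h⟩

lemma graphSq_adj_of_adj_adj (hxz : H.Adj x z) (hzy : H.Adj z y) (hxy : x ≠ y) :
    (graphSq H).Adj x y :=
  ⟨hxy, .inr ⟨z, hxz, hzy⟩⟩

lemma isClique_graphSq_insert_neighborSet (c : V) :
    (graphSq H).IsClique (insert c (H.neighborSet c)) := by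
  rintro a (rfl | ha) b (rfl | hb) hab
  · exact absurd rfl hab
  · exact graphSq_adj_of_adj hb
  · exact graphSq_adj_of_adj (ha : H.Adj _ a).symm
  · exact graphSq_adj_of_adj_adj (ha : H.Adj _ a).symm hb hab

lemma exists_adj_adj_ne_of_graphSq_ne_top (hc : H.Connected) (hG : graphSq H ≠ ⊤) (x : V) :
    ∃ u w, H.Adj x u ∧ H.Adj u w ∧ w ≠ x := by
  by_contra! hstar
  have hball : ∀ v, v ∈ insert x (H.neighborSet x) := by
    refine hc.mem_of_adj_closed ?_ (Set.mem_insert x _)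
    rintro v (rfl | hv) w hw
    exacts [.inr hw, .inl (hstar v w hv hw)]
  exact hG (isClique_univ.mp ((isClique_graphSq_insert_neighborSet x).subset fun v _ => hball v))

def IsLeafAt (H : SimpleGraph V) (x c : V) : Prop :=
  H.Adj x c ∧ ∀ z, H.Adj x z → z = c

lemma IsLeafAt.not_nontrivial (hl : IsLeafAt H x c) : ¬ (H.neighborSet x).Nontrivial :=
  fun ⟨u, hu, v, hv, huv⟩ => huv ((hl.2 u hu).trans (hl.2 v hv).symm)

lemma exists_isLeafAt_or_nontrivial (h : H.Adj x y) :
    (∃ c, IsLeafAt H x c) ∨ (H.neighborSet x).Nontrivial := by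
  by_cases hy : ∀ z, H.Adj x z → z = y
  · exact .inl ⟨y, h, hy⟩
  · push Not at hy
    obtain ⟨z, hz, hzy⟩ := hy
    exact .inr ⟨y, h, z, hz, hzy.symm⟩

lemma IsLeafAt.nontrivial_neighborSet_centre (hc : H.Connected) (hG : graphSq H ≠ ⊤)
    (hl : IsLeafAt H x c) : (H.neighborSet c).Nontrivial := by
  obtain ⟨u, w, hxu, huw, hwx⟩ := exists_adj_adj_ne_of_graphSq_ne_top hc hG x
  obtain rfl := hl.2 u hxu
  exact ⟨x, hl.1.symm, w, huw, hwx.symm⟩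

lemma IsLeafAt.graphSq_adj_iff (hx : IsLeafAt H x c) (hy : IsLeafAt H y d) (hxy : x ≠ y)
    (hyc : y ≠ c) : (graphSq H).Adj x y ↔ c = d := by
  refine ⟨?_, ?_⟩
  · rintro ⟨-, h | ⟨z, hxz, hzy⟩⟩
    · exact absurd (hx.2 y h) hyc
    · obtain rfl := hx.2 z hxz
      exact hy.2 z hzy.symm
  · rintro rfl
    exact graphSq_adj_of_adj_adj hx.1 hy.1.symm hxy

lemma IsLeafAt.isClique_neighborSet_graphSq (hl : IsLeafAt H x c) :
    (graphSq H).IsClique ((graphSq H).neighborSet x) := by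
  refine (isClique_graphSq_insert_neighborSet c).subset ?_
  rintro s ⟨-, h | ⟨t, hxt, hts⟩⟩
  exacts [.inl (hl.2 s h), .inr (hl.2 t hxt ▸ hts)]

lemma not_isClique_neighborSet_graphSq (hc : H.Connected) (hG : graphSq H ≠ ⊤)
    (hg : 6 ≤ H.egirth) (hx : (H.neighborSet x).Nontrivial) :
    ¬ (graphSq H).IsClique ((graphSq H).neighborSet x) := by
  intro hcl
  have hg₄ : 4 ≤ H.egirth := le_trans (by norm_num) hg
  obtain ⟨u, w, hxu, huw, hwx⟩ := exists_adj_adj_ne_of_graphSq_ne_top hc hG x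
  obtain ⟨v, hxv, hvu⟩ := hx.exists_ne u
  have hwv : w ≠ v := by
    rintro rfl
    exact no_cycle3 hg₄ hxu huw (hxv : H.Adj x w).symm
  -- a path of length at most 2 from `w` to `v` closes a 4- or 5-cycle through `u` and `x`
  rcases (hcl (graphSq_adj_of_adj_adj hxu huw hwx.symm) (graphSq_adj_of_adj hxv) hwv).2 with
    h | ⟨s, hws, hsv⟩
  · exact no_cycle4 (le_trans (by norm_num) hg) hxu huw h (hxv : H.Adj x v).symm hwx.symm
      hvu.symm
  · have hsu : s ≠ u := by
      rintro rfl
      exact no_cycle3 hg₄ hxu hsv (hxv : H.Adj x v).symm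
    have hsx : s ≠ x := by
      rintro rfl
      exact no_cycle3 hg₄ hxu huw hws
    exact no_cycle5 hg hxu huw hws hsv (hxv : H.Adj x v).symm hwx.symm hsx.symm hsu.symm
      hvu.symm hwv

lemma isClique_neighborSet_graphSq_iff (hc : H.Connected) (hG : graphSq H ≠ ⊤)
    (hg : 6 ≤ H.egirth) :
    (graphSq H).IsClique ((graphSq H).neighborSet x) ↔ ∃ c, IsLeafAt H x c := by
  refine ⟨fun hcl => ?_, fun ⟨c, hl⟩ => hl.isClique_neighborSet_graphSq⟩
  obtain ⟨u, -, hxu, -⟩ := exists_adj_adj_ne_of_graphSq_ne_top hc hG x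
  exact (exists_isLeafAt_or_nontrivial hxu).resolve_right
    fun hx => not_isClique_neighborSet_graphSq hc hG hg hx hcl

lemma nontrivial_neighborSet_iff (hc : H.Connected) (hG : graphSq H ≠ ⊤) :
    (H.neighborSet x).Nontrivial ↔ ¬ ∃ c, IsLeafAt H x c := by
  refine ⟨fun hx ⟨c, hl⟩ => hl.not_nontrivial hx, fun hx => ?_⟩
  obtain ⟨u, -, hxu, -⟩ := exists_adj_adj_ne_of_graphSq_ne_top hc hG x
  exact (exists_isLeafAt_or_nontrivial hxu).resolve_left hx

end Square

section SameSquare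

variable {H₁ H₂ : SimpleGraph V} {x y m c c' w : V}

lemma isLeafAt_of_graphSq_eq (hg₁ : 7 ≤ H₁.egirth) (hg₂ : 6 ≤ H₂.egirth)
    (hsq : graphSq H₁ = graphSq H₂) (hxy : H₁.Adj x y) (hxy₂ : ¬ H₂.Adj x y)
    (hxm : H₂.Adj x m) (hmy : H₂.Adj m y) (hmx : H₁.Adj m x) : IsLeafAt H₂ y m := by
  refine ⟨hmy.symm, fun v hyv => ?_⟩
  by_contra hvm
  have hvx : v ≠ x := by
    rintro rfl
    exact hxy₂ hyv.symm
  -- In `H₂` the vertex `v` is at distance 3 from `x`, ...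
  have hvx₁ : ¬ (graphSq H₁).Adj v x := by
    rw [hsq]
    rintro ⟨-, h | ⟨z, hvz, hzx⟩⟩
    · exact no_cycle4 (le_trans (by norm_num) hg₂) hxm hmy hyv h hxy.ne (Ne.symm hvm)
    · have hzm : z ≠ m := by
        rintro rfl
        exact no_cycle3 (le_trans (by norm_num) hg₂) hyv hvz hmy
      have hzy : z ≠ y := by
        rintro rfl
        exact hxy₂ hzx.symm
      exact no_cycle5 hg₂ hxm hmy hyv hvz hzx hxy.ne hvx.symm (Ne.symm hvm) hzm.symm hzy.symm
  -- ... but in `H₁` it is at distance 2 from both `y` and `m`, which closes a 6-cycle through `x`.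
  obtain ⟨b, hvb, hby⟩ : ∃ b, H₁.Adj v b ∧ H₁.Adj b y := by
    rcases (hsq ▸ graphSq_adj_of_adj hyv.symm : (graphSq H₁).Adj v y).2 with h | h
    · exact absurd (graphSq_adj_of_adj_adj h hxy.symm hvx) hvx₁
    · exact h
  obtain ⟨t, hvt, htm⟩ : ∃ t, H₁.Adj v t ∧ H₁.Adj t m := by
    rcases (hsq ▸ graphSq_adj_of_adj_adj hyv.symm hmy.symm hvm :
      (graphSq H₁).Adj v m).2 with h | h
    · exact absurd (graphSq_adj_of_adj_adj h hmx hvx) hvx₁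
    · exact h
  have hbx : b ≠ x := by
    rintro rfl
    exact hvx₁ (graphSq_adj_of_adj hvb)
  have htx : t ≠ x := by
    rintro rfl
    exact hvx₁ (graphSq_adj_of_adj hvt)
  have hbm : b ≠ m := by
    rintro rfl
    exact no_cycle3 (le_trans (by norm_num) hg₁) hxy hby.symm hmx
  have hbt : b ≠ t := by
    rintro rfl
    exact no_cycle4 (le_trans (by norm_num) hg₁) hby hxy.symm hmx.symm htm.symm hbx hmy.ne'
  have hyt : y ≠ t := by
    rintro rfl
    exact hvx₁ (graphSq_adj_of_adj_adj hvt hxy.symm hvx)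
  exact no_cycle6 hg₁ hvb hby hxy.symm hmx.symm htm.symm hvt.symm hyv.ne' hvx hvm hbx
    hbm hbt hmy.ne' hyt htx.symm

lemma adj_of_graphSq_eq (hg₁ : 7 ≤ H₁.egirth) (hg₂ : 6 ≤ H₂.egirth)
    (hsq : graphSq H₁ = graphSq H₂) (hxy : H₁.Adj x y) (hx : (H₂.neighborSet x).Nontrivial)
    (hy : (H₂.neighborSet y).Nontrivial) : H₂.Adj x y := by
  by_contra hxy₂
  obtain ⟨m, hxm, hmy⟩ : ∃ m, H₂.Adj x m ∧ H₂.Adj m y :=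
    ((hsq ▸ graphSq_adj_of_adj hxy : (graphSq H₂).Adj x y).2).resolve_left hxy₂
  by_cases hmx : H₁.Adj m x
  · exact (isLeafAt_of_graphSq_eq hg₁ hg₂ hsq hxy hxy₂ hxm hmy hmx).not_nontrivial hy
  by_cases hmy₁ : H₁.Adj m y
  · exact (isLeafAt_of_graphSq_eq hg₁ hg₂ hsq hxy.symm (fun h => hxy₂ h.symm) hmy.symm hxm.symm
      hmy₁).not_nontrivial hx
  obtain ⟨z, hmz, hzx⟩ : ∃ z, H₁.Adj m z ∧ H₁.Adj z x :=
    ((hsq ▸ graphSq_adj_of_adj hxm.symm : (graphSq H₁).Adj m x).2).resolve_left hmx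
  obtain ⟨w, hmw, hwy⟩ : ∃ w, H₁.Adj m w ∧ H₁.Adj w y :=
    ((hsq ▸ graphSq_adj_of_adj hmy : (graphSq H₁).Adj m y).2).resolve_left hmy₁
  by_cases hzw : z = w
  · subst hzw
    exact no_cycle3 (le_trans (by norm_num) hg₁) hxy hwy.symm hzx
  have hzy : z ≠ y := by
    rintro rfl
    exact hmy₁ hmz
  have hwx : w ≠ x := by
    rintro rfl
    exact hmx hmw
  exact no_cycle5 (le_trans (by norm_num) hg₁) hmz hzx hxy hwy.symm hmw.symm hxm.ne' hmy.ne hzy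
    hzw hwx.symm

lemma adj_of_isLeafAt_of_isLeafAt (hsq : graphSq H₁ = graphSq H₂) (hx₁ : IsLeafAt H₁ x c)
    (hx₂ : IsLeafAt H₂ x c') (hcc' : c ≠ c') : H₁.Adj c c' := by
  rcases (hsq ▸ graphSq_adj_of_adj hx₂.1 : (graphSq H₁).Adj x c').2 with h | ⟨z, hxz, hzc'⟩
  · exact absurd (hx₁.2 c' h).symm hcc'
  · exact hx₁.2 z hxz ▸ hzc'

lemma eq_of_adj_of_adj (hg₂ : 4 ≤ H₂.egirth) (hsq : graphSq H₁ = graphSq H₂)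
    (hx₁ : IsLeafAt H₁ x c) (hx₂ : IsLeafAt H₂ x c') (hcc' : c ≠ c') (hw₁ : H₁.Adj c w)
    (hw₂ : H₂.Adj c w) : w = c' := by
  by_contra hwc'
  have hwx : w ≠ x := by
    rintro rfl
    exact hcc' (hx₂.2 c hw₂.symm)
  rcases (hsq ▸ graphSq_adj_of_adj_adj hx₁.1 hw₁ hwx.symm : (graphSq H₂).Adj x w).2 with
    h | ⟨z, hxz, hzw⟩
  · exact hwc' (hx₂.2 w h)
  · obtain rfl := hx₂.2 z hxz
    exact no_cycle3 hg₂ hw₂ hzw.symm (adj_of_isLeafAt_of_isLeafAt hsq.symm hx₂ hx₁ hcc'.symm)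

end SameSquare

structure CommonSqRoots (H₁ H₂ : SimpleGraph V) : Prop where
  connected₁ : H₁.Connected
  connected₂ : H₂.Connected
  egirth₁ : 7 ≤ H₁.egirth
  egirth₂ : 7 ≤ H₂.egirth
  sq_eq : graphSq H₁ = graphSq H₂
  sq_ne_top : graphSq H₁ ≠ ⊤

namespace CommonSqRoots

variable {H₁ H₂ : SimpleGraph V} (h : CommonSqRoots H₁ H₂) {x y c c' : V}
include h

lemma symm : CommonSqRoots H₂ H₁ :=
  ⟨h.connected₂, h.connected₁, h.egirth₂, h.egirth₁, h.sq_eq.symm, h.sq_eq ▸ h.sq_ne_top⟩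

lemma exists_isLeafAt (hx : IsLeafAt H₁ x c) : ∃ c', IsLeafAt H₂ x c' := by
  rw [← isClique_neighborSet_graphSq_iff h.connected₂ h.symm.sq_ne_top
    (le_trans (by norm_num) h.egirth₂), ← h.sq_eq]
  exact hx.isClique_neighborSet_graphSq

lemma nontrivial_neighborSet (hx : (H₁.neighborSet x).Nontrivial) :
    (H₂.neighborSet x).Nontrivial := by
  rw [nontrivial_neighborSet_iff h.connected₂ h.symm.sq_ne_top]
  rintro ⟨c, hl⟩
  obtain ⟨c', hl'⟩ := h.symm.exists_isLeafAt hl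
  exact hl'.not_nontrivial hx

lemma adj (hxy : H₁.Adj x y) (hx : (H₁.neighborSet x).Nontrivial)
    (hy : (H₁.neighborSet y).Nontrivial) : H₂.Adj x y :=
  adj_of_graphSq_eq h.egirth₁ (le_trans (by norm_num) h.egirth₂) h.sq_eq hxy
    (h.nontrivial_neighborSet hx) (h.nontrivial_neighborSet hy)

lemma le_of_forall_isLeafAt (hcen : ∀ x c c', IsLeafAt H₁ x c → IsLeafAt H₂ x c' → c = c') :
    H₁ ≤ H₂ := by
  have hleaf : ∀ {a b}, IsLeafAt H₁ a b → H₂.Adj a b := fun {a b} hab => by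
    obtain ⟨b', hab'⟩ := h.exists_isLeafAt hab
    exact hcen a b b' hab hab' ▸ hab'.1
  intro a b hab
  rcases exists_isLeafAt_or_nontrivial hab with ⟨d, ha⟩ | ha
  · exact ha.2 b hab ▸ hleaf ha
  rcases exists_isLeafAt_or_nontrivial hab.symm with ⟨d, hb⟩ | hb
  · exact (hb.2 a hab.symm ▸ hleaf hb).symm
  exact h.adj hab ha hb

lemma eq_or_eq_of_nontrivial (hx₁ : IsLeafAt H₁ x c) (hx₂ : IsLeafAt H₂ x c') (hcc' : c ≠ c')
    {v : V} (hv : (H₁.neighborSet v).Nontrivial) : v = c ∨ v = c' := by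
  have hc : (H₁.neighborSet c).Nontrivial :=
    hx₁.nontrivial_neighborSet_centre h.connected₁ h.sq_ne_top
  have hc' : (H₁.neighborSet c').Nontrivial := h.symm.nontrivial_neighborSet
    (hx₂.nontrivial_neighborSet_centre h.connected₂ h.symm.sq_ne_top)
  have hcentre : ∀ {d w}, (d = c ∨ d = c') → H₁.Adj d w → (H₁.neighborSet w).Nontrivial →
      w = c ∨ w = c' := by
    rintro d w (rfl | rfl) hdw hw
    · exact .inr (eq_of_adj_of_adj (le_trans (by norm_num) h.egirth₂) h.sq_eq hx₁ hx₂ hcc' hdw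
        (h.adj hdw hc hw))
    · exact .inl (eq_of_adj_of_adj (le_trans (by norm_num) h.egirth₁) h.sq_eq.symm hx₂ hx₁
        hcc'.symm (h.adj hdw hc' hw) hdw)
  -- the closed neighbourhoods of `c` and `c'` cover the connected graph `H₁`
  let T : Set V := {v | ∃ d, (d = c ∨ d = c') ∧ (v = d ∨ H₁.Adj d v)}
  have hT : ∀ v ∈ T, ∀ z, H₁.Adj v z → z ∈ T := by
    rintro v ⟨d, hd, rfl | hdv⟩ z hvz
    · exact ⟨v, hd, .inr hvz⟩
    rcases exists_isLeafAt_or_nontrivial hvz with ⟨e, hl⟩ | hv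
    · exact ⟨d, hd, .inl ((hl.2 z hvz).trans (hl.2 d hdv.symm).symm)⟩
    · exact ⟨v, hcentre hd hdv hv, .inr hvz⟩
  obtain ⟨d, hd, rfl | hdv⟩ := h.connected₁.mem_of_adj_closed hT ⟨c, .inl rfl, .inl rfl⟩ v
  exacts [hd, hcentre hd hdv hv]

lemma adj_swap_of_isLeafAt [DecidableEq V] (hx₁ : IsLeafAt H₁ x c) (hx₂ : IsLeafAt H₂ x c')
    (hcc' : c ≠ c') {v d : V} (hv : IsLeafAt H₁ v d) :
    H₂.Adj (Equiv.swap c c' v) (Equiv.swap c c' d) := by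
  have hvc : v ≠ c := by
    rintro rfl
    exact hv.not_nontrivial (hx₁.nontrivial_neighborSet_centre h.connected₁ h.sq_ne_top)
  have hvc' : v ≠ c' := by
    rintro rfl
    exact hv.not_nontrivial (h.symm.nontrivial_neighborSet
      (hx₂.nontrivial_neighborSet_centre h.connected₂ h.symm.sq_ne_top))
  obtain ⟨e, hv₂⟩ := h.exists_isLeafAt hv
  have hd : d = c ∨ d = c' := h.eq_or_eq_of_nontrivial hx₁ hx₂ hcc'
    (hv.nontrivial_neighborSet_centre h.connected₁ h.sq_ne_top)
  have he : e = c' ∨ e = c := h.symm.eq_or_eq_of_nontrivial hx₂ hx₁ hcc'.symm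
    (hv₂.nontrivial_neighborSet_centre h.connected₂ h.symm.sq_ne_top)
  have hcen : c = d ↔ c' = e := by
    by_cases hxv : x = v
    · subst hxv
      exact iff_of_true (hx₁.2 d hv.1).symm (hx₂.2 e hv₂.1).symm
    · rw [← hx₁.graphSq_adj_iff hv hxv hvc, ← hx₂.graphSq_adj_iff hv₂ hxv hvc', h.sq_eq]
  rw [Equiv.swap_apply_of_ne_of_ne hvc hvc']
  rcases hd with rfl | rfl
  · rw [Equiv.swap_apply_left, hcen.mp rfl]
    exact hv₂.1
  · rw [Equiv.swap_apply_right]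
    rcases he with rfl | rfl
    · exact absurd (hcen.mpr rfl) hcc'
    · exact hv₂.1

lemma adj_swap [DecidableEq V] (hx₁ : IsLeafAt H₁ x c) (hx₂ : IsLeafAt H₂ x c') (hcc' : c ≠ c')
    {a b : V} (hab : H₁.Adj a b) : H₂.Adj (Equiv.swap c c' a) (Equiv.swap c c' b) := by
  rcases exists_isLeafAt_or_nontrivial hab with ⟨d, ha⟩ | ha
  · exact ha.2 b hab ▸ h.adj_swap_of_isLeafAt hx₁ hx₂ hcc' ha
  rcases exists_isLeafAt_or_nontrivial hab.symm with ⟨d, hb⟩ | hb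
  · exact (hb.2 a hab.symm ▸ h.adj_swap_of_isLeafAt hx₁ hx₂ hcc' hb).symm
  have h₂cc' : H₂.Adj c c' := (adj_of_isLeafAt_of_isLeafAt h.sq_eq.symm hx₂ hx₁ hcc'.symm).symm
  rcases h.eq_or_eq_of_nontrivial hx₁ hx₂ hcc' ha with rfl | rfl <;>
    rcases h.eq_or_eq_of_nontrivial hx₁ hx₂ hcc' hb with rfl | rfl
  · exact absurd rfl hab.ne
  · simpa using h₂cc'.symm
  · simpa using h₂cc'
  · exact absurd rfl hab.ne

def isoSwap [DecidableEq V] (hx₁ : IsLeafAt H₁ x c) (hx₂ : IsLeafAt H₂ x c') (hcc' : c ≠ c') :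
    H₁ ≃g H₂ where
  toEquiv := Equiv.swap c c'
  map_rel_iff' := ⟨fun hab => by
    simpa [Equiv.swap_comm c' c] using h.symm.adj_swap hx₂ hx₁ hcc'.symm hab,
    h.adj_swap hx₁ hx₂ hcc'⟩

end CommonSqRoots

end SimpleGraph

theorem stmt15 (H₁ H₂ : SimpleGraph V)
    (hc₁ : H₁.Connected) (hc₂ : H₂.Connected)
    (hg₁ : 7 ≤ H₁.girth) (hg₂ : 7 ≤ H₂.girth)
    (hsq : graphSq H₁ = graphSq H₂) (hnc : graphSq H₁ ≠ ⊤) :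
    Nonempty (H₁ ≃g H₂) := by
  classical
  have h : CommonSqRoots H₁ H₂ :=
    ⟨hc₁, hc₂, (Nat.cast_le.mpr hg₁).trans (ENat.natCast_toNat_le_self _),
      (Nat.cast_le.mpr hg₂).trans (ENat.natCast_toNat_le_self _), hsq, hnc⟩
  by_cases hleaf : ∃ x c c', IsLeafAt H₁ x c ∧ IsLeafAt H₂ x c' ∧ c ≠ c'
  · obtain ⟨x, c, c', hx₁, hx₂, hcc'⟩ := hleaf
    exact ⟨h.isoSwap hx₁ hx₂ hcc'⟩
  push Not at hleaf
  obtain rfl : H₁ = H₂ := le_antisymm (h.le_of_forall_isLeafAt hleaf)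
    (h.symm.le_of_forall_isLeafAt fun x c' c hx₂ hx₁ => (hleaf x c c' hx₁ hx₂).symm)
  exact ⟨.refl⟩
end

section
/- Let H be a connected graph with girth at least 7 on n vertices such that G = H² is not complete. Then G has at most n maximal cliques. -/
open SimpleGraph

variable {V : Type*}

/-!
In a graph `H` of girth at least 7, every clique of `H²` lies in a closed neighbourhood
`N[v]` of `H`. Two vertices of the clique are either adjacent in `H`, and then all others
lie on one side of that edge, or they have a common neighbour `c`, and then every other
vertex is adjacent to `c`; each alternative is forced because the other one closes a cycle
of length at most 6. As every `N[v]` is itself a clique of `H²`, the maximal cliques are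
among the `n` sets `N[v]`.
-/

namespace SimpleGraph

variable {H : SimpleGraph V}

def closedNeighborSet (H : SimpleGraph V) (v : V) : Set V := insert v (H.neighborSet v)

lemma false_of_cycle3 (hg : 4 ≤ H.girth) {a b c : V} (hab : H.Adj a b) (hbc : H.Adj b c)
    (hca : H.Adj c a) : False := by
  have hw : (Walk.cons hab (Walk.cons hbc (Walk.cons hca Walk.nil))).IsCycle := by
    simp [Walk.cons_isCycle_iff, Walk.cons_isPath_iff, hab.ne, hbc.ne, hca.ne, Ne.symm]
  simpa using hg.trans (girth_le_length hw)

lemma false_of_cycle4 (hg : 5 ≤ H.girth) {a b c d : V} (hab : H.Adj a b) (hbc : H.Adj b c)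
    (hcd : H.Adj c d) (hda : H.Adj d a) (hac : a ≠ c) (hbd : b ≠ d) : False := by
  have hw : (Walk.cons hab (Walk.cons hbc (Walk.cons hcd (Walk.cons hda
      Walk.nil)))).IsCycle := by
    simp [Walk.cons_isCycle_iff, Walk.cons_isPath_iff, *, hab.ne, hbc.ne, hcd.ne, hda.ne, Ne.symm]
  simpa using hg.trans (girth_le_length hw)

lemma false_of_cycle5 (hg : 6 ≤ H.girth) {a b c d e : V} (hab : H.Adj a b) (hbc : H.Adj b c)
    (hcd : H.Adj c d) (hde : H.Adj d e) (hea : H.Adj e a)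
    (hac : a ≠ c) (had : a ≠ d) (hbd : b ≠ d) (hbe : b ≠ e) (hce : c ≠ e) : False := by
  have hw : (Walk.cons hab (Walk.cons hbc (Walk.cons hcd (Walk.cons hde
      (Walk.cons hea Walk.nil))))).IsCycle := by
    simp [Walk.cons_isCycle_iff, Walk.cons_isPath_iff, *, hab.ne, hbc.ne, hcd.ne, hde.ne, hea.ne,
      Ne.symm]
  simpa using hg.trans (girth_le_length hw)

lemma false_of_cycle6 (hg : 7 ≤ H.girth) {a b c d e f : V} (hab : H.Adj a b)
    (hbc : H.Adj b c) (hcd : H.Adj c d) (hde : H.Adj d e) (hef : H.Adj e f) (hfa : H.Adj f a)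
    (hac : a ≠ c) (had : a ≠ d) (hae : a ≠ e) (hbd : b ≠ d) (hbe : b ≠ e) (hbf : b ≠ f)
    (hce : c ≠ e) (hcf : c ≠ f) (hdf : d ≠ f) : False := by
  have hw : (Walk.cons hab (Walk.cons hbc (Walk.cons hcd (Walk.cons hde
      (Walk.cons hef (Walk.cons hfa Walk.nil)))))).IsCycle := by
    simp [Walk.cons_isCycle_iff, Walk.cons_isPath_iff, *, hab.ne, hbc.ne, hcd.ne, hde.ne, hef.ne,
      hfa.ne, Ne.symm]
  simpa using hg.trans (girth_le_length hw)

lemma isClique_graphSq_closedNeighborSet (v : V) :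
    (graphSq H).IsClique (H.closedNeighborSet v) := by
  rintro x (rfl | hx) y (rfl | hy) hxy
  · exact absurd rfl hxy
  · exact ⟨hxy, Or.inl hy⟩
  · exact ⟨hxy, Or.inl hx.symm⟩
  · exact ⟨hxy, Or.inr ⟨v, hx.symm, hy⟩⟩

lemma adj_or_adj_of_graphSq_adj (hg : 6 ≤ H.girth) {a b x : V} (hab : H.Adj a b)
    (hxa : (graphSq H).Adj x a) (hxb : (graphSq H).Adj x b) : H.Adj a x ∨ H.Adj b x := by
  by_contra! ⟨hax, hbx⟩
  obtain ⟨z, hxz, hza⟩ := hxa.2.resolve_left fun h => hax h.symm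
  obtain ⟨w, hxw, hwb⟩ := hxb.2.resolve_left fun h => hbx h.symm
  by_cases hzw : z = w
  · subst hzw
    exact false_of_cycle3 (by omega) hab hwb.symm hza
  · refine false_of_cycle5 hg hxz hza hab hwb.symm hxw.symm hxa.1 hxb.1 ?_ hzw ?_
    · rintro rfl; exact hbx hxz.symm
    · rintro rfl; exact hax hxw.symm

lemma subset_closedNeighborSet_or_of_adj (hg : 6 ≤ H.girth) {S : Set V}
    (hS : (graphSq H).IsClique S) {a b : V} (ha : a ∈ S) (hb : b ∈ S) (hab : H.Adj a b) :
    S ⊆ H.closedNeighborSet a ∨ S ⊆ H.closedNeighborSet b := by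
  by_contra! ⟨hna, hnb⟩
  obtain ⟨x, hxS, hx⟩ := Set.not_subset.1 hna
  obtain ⟨y, hyS, hy⟩ := Set.not_subset.1 hnb
  simp only [closedNeighborSet, Set.mem_insert_iff, mem_neighborSet, not_or] at hx hy
  obtain ⟨hxa, hax⟩ := hx
  obtain ⟨hyb, hby⟩ := hy
  have hxb : x ≠ b := by rintro rfl; exact hax hab
  have hya : y ≠ a := by rintro rfl; exact hby hab.symm
  have hbx : H.Adj b x := (adj_or_adj_of_graphSq_adj hg hab (hS hxS ha hxa)
    (hS hxS hb hxb)).resolve_left hax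
  have hay : H.Adj a y := (adj_or_adj_of_graphSq_adj hg hab (hS hyS ha hya)
    (hS hyS hb hyb)).resolve_right hby
  have hxy : x ≠ y := by rintro rfl; exact hby hbx
  rcases (hS hyS hxS hxy.symm).2 with hyx | ⟨z, hyz, hzx⟩
  · exact false_of_cycle4 (by omega) hay hyx hbx.symm hab.symm (Ne.symm hxa) hyb
  · refine false_of_cycle5 hg hay hyz hzx hbx.symm hab.symm ?_ (Ne.symm hxa) hxy.symm hyb ?_
    · rintro rfl; exact hax hzx
    · rintro rfl; exact hby hyz.symm

lemma not_adj_of_adj_of_adj_of_graphSq_adj (hg : 6 ≤ H.girth) {a b c x : V}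
    (hac : H.Adj a c) (hcb : H.Adj c b) (hab : a ≠ b) (hxc : x ≠ c)
    (hxb : (graphSq H).Adj x b) : ¬ H.Adj x a := by
  intro hxa
  rcases hxb.2 with hxb' | ⟨w, hxw, hwb⟩
  · exact false_of_cycle4 (by omega) hxa hac hcb hxb'.symm hxc hab
  · have hwc : w ≠ c := by rintro rfl; exact false_of_cycle3 (by omega) hxa hac hxw.symm
    have hwa : w ≠ a := by rintro rfl; exact false_of_cycle3 (by omega) hac hcb hwb.symm
    exact false_of_cycle5 hg hxa hac hcb hwb.symm hxw.symm hxc hxb.1 hab hwa.symm hwc.symm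

lemma subset_closedNeighborSet_of_adj_of_adj (hg : 7 ≤ H.girth) {S : Set V}
    (hS : (graphSq H).IsClique S) {a b c : V} (ha : a ∈ S) (hb : b ∈ S) (hab : a ≠ b)
    (hac : H.Adj a c) (hcb : H.Adj c b) : S ⊆ H.closedNeighborSet c := by
  intro x hxS
  by_cases hxc : x = c
  · exact Or.inl hxc
  by_cases hxa : x = a
  · exact Or.inr (hxa ▸ hac.symm)
  by_cases hxb : x = b
  · exact Or.inr (hxb ▸ hcb)
  refine Or.inr ?_
  have hxa' : ¬ H.Adj x a :=
    not_adj_of_adj_of_adj_of_graphSq_adj (by omega) hac hcb hab hxc (hS hxS hb hxb)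
  have hxb' : ¬ H.Adj x b :=
    not_adj_of_adj_of_adj_of_graphSq_adj (by omega) hcb.symm hac.symm hab.symm hxc
      (hS hxS ha hxa)
  obtain ⟨z, hxz, hza⟩ := (hS hxS ha hxa).2.resolve_left hxa'
  obtain ⟨w, hxw, hwb⟩ := (hS hxS hb hxb).2.resolve_left hxb'
  by_cases hzc : z = c
  · exact hzc ▸ hxz.symm
  by_cases hwc : w = c
  · exact hwc ▸ hxw.symm
  by_cases hzw : z = w
  · subst hzw
    exact (false_of_cycle4 (by omega) hza.symm hwb hcb.symm hac.symm hab hzc).elim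
  · refine (false_of_cycle6 hg hxz hza hac hcb hwb.symm hxw.symm hxa hxc hxb hzc ?_ hzw hab
      ?_ (Ne.symm hwc)).elim
    · rintro rfl; exact hxb' hxz
    · rintro rfl; exact hxa' hxw

lemma exists_subset_closedNeighborSet (hg : 7 ≤ H.girth) {S : Set V}
    (hS : (graphSq H).IsClique S) (hne : S.Nonempty) : ∃ v, S ⊆ H.closedNeighborSet v := by
  obtain ⟨a, ha⟩ := hne
  by_cases hsub : S ⊆ {a}
  · exact ⟨a, hsub.trans (Set.singleton_subset_iff.2 (Set.mem_insert a _))⟩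
  obtain ⟨b, hb, hba⟩ := Set.not_subset.1 hsub
  rcases (hS ha hb (Ne.symm hba)).2 with hab | ⟨c, hac, hcb⟩
  · rcases subset_closedNeighborSet_or_of_adj (by omega) hS ha hb hab with h | h
    exacts [⟨a, h⟩, ⟨b, h⟩]
  · exact ⟨c, subset_closedNeighborSet_of_adj_of_adj hg hS ha hb (Ne.symm hba) hac hcb⟩

end SimpleGraph

lemma IsMaxClique.nonempty [Nonempty V] {G : SimpleGraph V} {Q : Set V}
    (hQ : IsMaxClique G Q) : Q.Nonempty := by
  rw [Set.nonempty_iff_ne_empty]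
  rintro rfl
  obtain ⟨a⟩ := ‹Nonempty V›
  exact Set.singleton_ne_empty a (hQ.2 {a} (Set.pairwise_singleton a _) (Set.empty_subset _))

lemma IsMaxClique.exists_eq_closedNeighborSet [Nonempty V] {H : SimpleGraph V}
    (hg : 7 ≤ H.girth) {Q : Set V} (hQ : IsMaxClique (graphSq H) Q) :
    ∃ v, H.closedNeighborSet v = Q := by
  obtain ⟨v, hv⟩ := exists_subset_closedNeighborSet hg hQ.1 hQ.nonempty
  exact ⟨v, hQ.2 _ (isClique_graphSq_closedNeighborSet v) hv⟩

theorem stmt16_general [Fintype V] (H : SimpleGraph V)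
    (hconn : H.Connected) (hgirth : 7 ≤ H.girth) :
    {Q : Set V | IsMaxClique (graphSq H) Q}.ncard ≤ Fintype.card V := by
  have := hconn.nonempty
  have hsub : {Q : Set V | IsMaxClique (graphSq H) Q} ⊆ Set.range H.closedNeighborSet :=
    fun _ hQ => hQ.exists_eq_closedNeighborSet hgirth
  calc {Q : Set V | IsMaxClique (graphSq H) Q}.ncard
      ≤ (Set.range H.closedNeighborSet).ncard := Set.ncard_le_ncard hsub (Set.finite_range _)
    _ = Nat.card (Set.range H.closedNeighborSet) := (Nat.card_coe_set_eq _).symm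
    _ ≤ Nat.card V := Finite.card_range_le _
    _ = Fintype.card V := Nat.card_eq_fintype_card

theorem stmt16 [Fintype V] (H : SimpleGraph V)
    (hconn : H.Connected) (hgirth : 7 ≤ H.girth) (hnc : graphSq H ≠ ⊤) :
    {Q : Set V | IsMaxClique (graphSq H) Q}.ncard ≤ Fintype.card V :=
  stmt16_general H hconn hgirth
end
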